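/- For a finite lattice L, an element w is a narrows if it is comparable with every element of L. If (a,b) is a gluing edge (a ≺ b and both a,b are narrows), then L decomposes as ↓a +̇ [a,b] +̇ ↑b (glued sum), and cd(L) = cd(↓a +̇ ↑b). -/

import Mathlib

/-!
A narrows `w` splits `L` as `↓w +̇ ↑w` via `x ↦ (x ⊓ w, x ⊔ w)`; applied to `a` in `L`
and then to `b` in `↑a`, this gives `L ≅ ↓a +̇ [a,b] +̇ ↑b`. In a glued sum every element
is comparable with the glue point, so a congruence is determined by its restrictions to
the two summands; hence `Con (K +̇ M) ≃ Con K × Con M`, and together with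
`|K +̇ M| = |K| + |M| - 1` this makes `cd` multiplicative. Finally `[a,b]` is a two-element
chain, which has exactly two congruences, so its `cd` is `1`.
-/

/-- A congruence of a lattice: an equivalence relation compatible with `⊔` and `⊓`. -/
structure LatCon (L : Type) [Lattice L] : Type where
  r : L → L → Prop
  refl : ∀ a, r a a
  symm : ∀ {a b}, r a b → r b a
  trans : ∀ {a b c}, r a b → r b c → r a c
  sup : ∀ {a b c d}, r a b → r c d → r (a ⊔ c) (b ⊔ d)
  inf : ∀ {a b c d}, r a b → r c d → r (a ⊓ c) (b ⊓ d)

/-- The congruence density of a finite lattice `L`. -/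
noncomputable def latCd (L : Type) [Lattice L] : ℝ :=
  (Nat.card (LatCon L) : ℝ) / 2 ^ (Nat.card L - 1)

/-- `w` is a narrows of `L` if it is comparable with every element of `L`. -/
def Narrows (L : Type) [Lattice L] (w : L) : Prop := ∀ x : L, w ≤ x ∨ x ≤ w

/-- The glued sum `K +̇ M`, realized as the sublattice
`(K × {⊥}) ∪ ({⊤} × M)` of the direct product `K × M`. -/
def gluedSumSublattice (K M : Type) [Lattice K] [Lattice M] [BoundedOrder K]
    [BoundedOrder M] : Sublattice (K × M) where
  carrier := {p | p.2 = ⊥ ∨ p.1 = ⊤}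
  supClosed' := by
    rintro ⟨a, x⟩ (hx | hx) ⟨b, y⟩ (hy | hy) <;> dsimp only at hx hy ⊢
    · left; show x ⊔ y = ⊥; rw [hx, hy, sup_idem]
    · right; show a ⊔ b = ⊤; rw [hy, sup_top_eq]
    · right; show a ⊔ b = ⊤; rw [hx, top_sup_eq]
    · right; show a ⊔ b = ⊤; rw [hx, top_sup_eq]
  infClosed' := by
    rintro ⟨a, x⟩ (hx | hx) ⟨b, y⟩ (hy | hy) <;> dsimp only at hx hy ⊢
    · left; show x ⊓ y = ⊥; rw [hx, bot_inf_eq]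
    · left; show x ⊓ y = ⊥; rw [hx, bot_inf_eq]
    · left; show x ⊓ y = ⊥; rw [hy, inf_bot_eq]
    · right; show a ⊓ b = ⊤; rw [hx, hy, inf_idem]

/-- The glued sum `K +̇ M` of two bounded lattices, obtained by identifying `⊤` of `K`
with `⊥` of `M`. -/
def GluedSum (K M : Type) [Lattice K] [Lattice M] [BoundedOrder K] [BoundedOrder M] :
    Type := gluedSumSublattice K M

instance (K M : Type) [Lattice K] [Lattice M] [BoundedOrder K] [BoundedOrder M] :
    Lattice (GluedSum K M) :=
  inferInstanceAs (Lattice (gluedSumSublattice K M))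

instance (K M : Type) [Lattice K] [Lattice M] [BoundedOrder K] [BoundedOrder M] :
    BoundedOrder (GluedSum K M) where
  top := ⟨(⊤, ⊤), Or.inr rfl⟩
  le_top _ := ⟨le_top, le_top⟩
  bot := ⟨(⊥, ⊥), Or.inl rfl⟩
  bot_le _ := ⟨bot_le, bot_le⟩

attribute [ext] LatCon

namespace LatCon

variable {K M : Type} [Lattice K] [Lattice M]

def comap {F : Type} [FunLike F K M] [LatticeHomClass F K M] (f : F) (θ : LatCon M) :
    LatCon K where
  r x y := θ.r (f x) (f y)
  refl _ := θ.refl _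
  symm := θ.symm
  trans := θ.trans
  sup h h' := by simpa only [map_sup] using θ.sup h h'
  inf h h' := by simpa only [map_inf] using θ.inf h h'

def prod (θ : LatCon K) (η : LatCon M) : LatCon (K × M) where
  r p q := θ.r p.1 q.1 ∧ η.r p.2 q.2
  refl _ := ⟨θ.refl _, η.refl _⟩
  symm h := ⟨θ.symm h.1, η.symm h.2⟩
  trans h h' := ⟨θ.trans h.1 h'.1, η.trans h.2 h'.2⟩
  sup h h' := ⟨θ.sup h.1 h'.1, η.sup h.2 h'.2⟩
  inf h h' := ⟨θ.inf h.1 h'.1, η.inf h.2 h'.2⟩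

def congr (e : K ≃o M) : LatCon K ≃ LatCon M where
  toFun := comap e.symm
  invFun := comap e
  left_inv θ := by ext; simp [comap]
  right_inv θ := by ext; simp [comap]

def diagonal (K : Type) [Lattice K] : LatCon K where
  r := Eq
  refl := Eq.refl
  symm := Eq.symm
  trans := Eq.trans
  sup h h' := h ▸ h' ▸ rfl
  inf h h' := h ▸ h' ▸ rfl

def total (K : Type) [Lattice K] : LatCon K where
  r _ _ := True
  refl _ := trivial
  symm _ := trivial
  trans _ _ := trivial
  sup _ _ := trivial
  inf _ _ := trivial

theorem card_eq_two (hK : Nat.card K = 2) : Nat.card (LatCon K) = 2 := by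
  obtain ⟨u, v, huv, huniv⟩ := Nat.card_eq_two_iff.1 hK
  have hcover (x : K) : x = u ∨ x = v := by simpa [← huniv] using Set.mem_univ x
  refine Nat.card_eq_two_iff.2 ⟨diagonal K, total K, fun h => huv ?_, ?_⟩
  · have : (total K).r u v := trivial
    rwa [← h] at this
  refine Set.eq_univ_of_forall fun θ => ?_
  by_cases hθ : θ.r u v
  · right
    ext x y
    refine ⟨fun _ => trivial, fun _ => ?_⟩
    rcases hcover x with rfl | rfl <;> rcases hcover y with rfl | rfl
    exacts [θ.refl _, hθ, θ.symm hθ, θ.refl _]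
  · left
    ext x y
    refine ⟨fun hxy => ?_, fun hxy => hxy ▸ θ.refl x⟩
    rcases hcover x with rfl | rfl <;> rcases hcover y with rfl | rfl
    exacts [rfl, absurd hxy hθ, absurd (θ.symm hxy) hθ, rfl]

theorem r_iff_of_narrows (θ : LatCon K) {c : K} (hc : Narrows K c) {x y : K} :
    θ.r x y ↔ θ.r (x ⊓ c) (y ⊓ c) ∧ θ.r (x ⊔ c) (y ⊔ c) := by
  refine ⟨fun h => ⟨θ.inf h (θ.refl c), θ.sup h (θ.refl c)⟩, fun ⟨hinf, hsup⟩ => ?_⟩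
  rcases hc x with hx | hx <;> rcases hc y with hy | hy
  · simpa [sup_eq_left.2 hx, sup_eq_left.2 hy] using hsup
  · simp only [inf_eq_right.2 hx, inf_eq_left.2 hy, sup_eq_left.2 hx, sup_eq_right.2 hy]
      at hinf hsup
    exact θ.trans hsup hinf
  · simp only [inf_eq_left.2 hx, inf_eq_right.2 hy, sup_eq_right.2 hx, sup_eq_left.2 hy]
      at hinf hsup
    exact θ.trans hinf hsup
  · simpa [inf_eq_left.2 hx, inf_eq_left.2 hy] using hinf

end LatCon

theorem latCd_congr {K M : Type} [Lattice K] [Lattice M] (e : K ≃o M) : latCd K = latCd M := by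
  rw [latCd, latCd, Nat.card_congr (LatCon.congr e), Nat.card_congr e.toEquiv]

namespace GluedSum

variable {K M : Type} [Lattice K] [Lattice M] [BoundedOrder K] [BoundedOrder M]

def inl : LatticeHom K (GluedSum K M) where
  toFun x := ⟨(x, ⊥), Or.inl rfl⟩
  map_sup' _ _ := Subtype.ext (Prod.ext rfl (sup_idem ⊥).symm)
  map_inf' _ _ := Subtype.ext (Prod.ext rfl (inf_idem ⊥).symm)

def inr : LatticeHom M (GluedSum K M) where
  toFun y := ⟨(⊤, y), Or.inr rfl⟩
  map_sup' _ _ := Subtype.ext (Prod.ext (sup_idem ⊤).symm rfl)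
  map_inf' _ _ := Subtype.ext (Prod.ext (inf_idem ⊤).symm rfl)

def val : LatticeHom (GluedSum K M) (K × M) := (gluedSumSublattice K M).subtype

theorem narrows_inl_top : Narrows (GluedSum K M) (inl ⊤) := by
  rintro ⟨⟨x, y⟩, hy | hx⟩
  · exact Or.inr ⟨le_top, hy.le⟩
  · exact Or.inl ⟨hx.ge, bot_le⟩

theorem inf_inl_top (g : GluedSum K M) : g ⊓ inl ⊤ = inl g.1.1 :=
  Subtype.ext (Prod.ext (inf_top_eq _) (inf_bot_eq _))

theorem sup_inl_top (g : GluedSum K M) : g ⊔ inl ⊤ = inr g.1.2 :=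
  Subtype.ext (Prod.ext (sup_top_eq _) (sup_bot_eq _))

variable (K M) in
def latConEquiv : LatCon (GluedSum K M) ≃ LatCon K × LatCon M where
  toFun θ := (θ.comap inl, θ.comap inr)
  invFun p := (p.1.prod p.2).comap val
  left_inv θ := by
    ext g h
    rw [θ.r_iff_of_narrows narrows_inl_top, inf_inl_top, inf_inl_top, sup_inl_top, sup_inl_top]
    rfl
  right_inv p := by
    ext x y
    exacts [and_iff_left (p.2.refl ⊥), and_iff_right (p.1.refl ⊤)]

instance [Finite K] [Finite M] : Finite (GluedSum K M) :=
  Finite.of_injective val Subtype.val_injective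

variable (K M) in
theorem card_add_one [Finite K] [Finite M] :
    Nat.card (GluedSum K M) + 1 = Nat.card K + Nat.card M := by
  have hcarrier : (gluedSumSublattice K M : Set (K × M)) =
      Set.range (fun x : K => (x, (⊥ : M))) ∪ Set.range (fun y : M => ((⊤ : K), y)) := by
    ext ⟨x, y⟩
    change y = ⊥ ∨ x = ⊤ ↔ _
    simp [eq_comm]
  have hglue : Set.range (fun x : K => (x, (⊥ : M))) ∩ Set.range (fun y : M => ((⊤ : K), y)) =
      {(⊤, ⊥)} := by
    ext ⟨x, y⟩
    simp [and_comm, eq_comm]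
  rw [show Nat.card (GluedSum K M) = (gluedSumSublattice K M : Set (K × M)).ncard from
    Nat.card_coe_set_eq _, hcarrier, ← Set.ncard_singleton ((⊤ : K), (⊥ : M)), ← hglue,
    Set.ncard_union_add_ncard_inter, Set.ncard_range_of_injective, Set.ncard_range_of_injective]
  · exact fun y y' h => (Prod.mk.inj h).2
  · exact fun x x' h => (Prod.mk.inj h).1

def congr {K' M' : Type} [Lattice K'] [Lattice M'] [BoundedOrder K'] [BoundedOrder M']
    (e : K ≃o K') (f : M ≃o M') : GluedSum K M ≃o GluedSum K' M' where
  toFun g := ⟨(e g.1.1, f g.1.2), g.2.imp (by simp [·]) (by simp [·])⟩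
  invFun g := ⟨(e.symm g.1.1, f.symm g.1.2), g.2.imp (by simp [·]) (by simp [·])⟩
  left_inv g := Subtype.ext (Prod.ext (e.symm_apply_apply _) (f.symm_apply_apply _))
  right_inv g := Subtype.ext (Prod.ext (e.apply_symm_apply _) (f.apply_symm_apply _))
  map_rel_iff' := and_congr e.le_iff_le f.le_iff_le

end GluedSum

theorem latCd_gluedSum (K M : Type) [Lattice K] [Lattice M] [BoundedOrder K] [BoundedOrder M]
    [Finite K] [Finite M] : latCd (GluedSum K M) = latCd K * latCd M := by
  have hK : 0 < Nat.card K := Nat.card_pos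
  have hM : 0 < Nat.card M := Nat.card_pos
  have hcard : Nat.card (GluedSum K M) - 1 = (Nat.card K - 1) + (Nat.card M - 1) := by
    have := GluedSum.card_add_one K M
    omega
  rw [latCd, latCd, latCd, Nat.card_congr (GluedSum.latConEquiv K M), Nat.card_prod, hcard,
    pow_add, Nat.cast_mul, mul_div_mul_comm]

theorem latCd_eq_one_of_card_eq_two {C : Type} [Lattice C] (hC : Nat.card C = 2) :
    latCd C = 1 := by
  rw [latCd, LatCon.card_eq_two hC, hC]
  norm_num

theorem CovBy.latCd_Icc {L : Type} [Lattice L] {a b : L} (hab : a ⋖ b) :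
    latCd (Set.Icc a b) = 1 :=
  latCd_eq_one_of_card_eq_two (by rw [Nat.card_coe_set_eq, hab.Icc_eq, Set.ncard_pair hab.ne])

namespace Narrows

variable {N : Type} [Lattice N] {w : N}

theorem le_of_inf_le_of_sup_le (hw : Narrows N w) {x y : N} (hinf : x ⊓ w ≤ y ⊓ w)
    (hsup : x ⊔ w ≤ y ⊔ w) : x ≤ y := by
  rcases hw x with hx | hx
  · rcases hw y with hy | hy
    · simpa [sup_eq_left.2 hx, sup_eq_left.2 hy] using hsup
    · have hxw : x = w :=
        le_antisymm (by simpa [sup_eq_left.2 hx, sup_eq_right.2 hy] using hsup) hx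
      simpa [hxw, inf_eq_right.2 hy] using hinf
  · exact (inf_eq_left.2 hx).ge.trans (hinf.trans inf_le_left)

variable [BoundedOrder N]

def toGluedSum (hw : Narrows N w) : N ↪o GluedSum (Set.Iic w) (Set.Ici w) :=
  OrderEmbedding.ofMapLEIff
    (fun x => ⟨(⟨x ⊓ w, inf_le_right⟩, ⟨x ⊔ w, le_sup_right⟩),
      (hw x).symm.imp (fun h => Subtype.ext (sup_eq_right.2 h))
        (fun h => Subtype.ext (inf_eq_right.2 h))⟩)
    (fun _ _ => ⟨fun h => hw.le_of_inf_le_of_sup_le h.1 h.2,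
      fun h => ⟨inf_le_inf_right w h, sup_le_sup_right h w⟩⟩)

theorem toGluedSum_surjective (hw : Narrows N w) : Function.Surjective hw.toGluedSum := by
  rintro ⟨⟨p, q⟩, hq | hp⟩
  · refine ⟨p, Subtype.ext (Prod.ext (Subtype.ext (inf_eq_left.2 p.2)) ?_)⟩
    rw [hq]
    exact Subtype.ext (sup_eq_right.2 p.2)
  · refine ⟨q, Subtype.ext (Prod.ext ?_ (Subtype.ext (sup_eq_left.2 q.2)))⟩
    rw [hp]
    exact Subtype.ext (inf_eq_right.2 q.2)

noncomputable def orderIsoGluedSum (hw : Narrows N w) : N ≃o GluedSum (Set.Iic w) (Set.Ici w) :=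
  .ofSurjective hw.toGluedSum hw.toGluedSum_surjective

end Narrows

section Interval

variable {L : Type} [Lattice L] {a b : L}

def iicIciOrderIsoIcc (hab : a ≤ b) : Set.Iic (⟨b, hab⟩ : Set.Ici a) ≃o Set.Icc a b where
  toFun x := ⟨x.1.1, x.1.2, x.2⟩
  invFun y := ⟨⟨y.1, y.2.1⟩, y.2.2⟩
  map_rel_iff' := Iff.rfl

def iciIciOrderIsoIci (hab : a ≤ b) : Set.Ici (⟨b, hab⟩ : Set.Ici a) ≃o Set.Ici b where
  toFun x := ⟨x.1.1, x.2⟩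
  invFun y := ⟨⟨y.1, hab.trans y.2⟩, y.2⟩
  map_rel_iff' := Iff.rfl

noncomputable def Narrows.iciOrderIsoGluedSum [OrderTop L] (hb : Narrows L b) [Fact (a ≤ b)] :
    Set.Ici a ≃o GluedSum (Set.Icc a b) (Set.Ici b) :=
  have hab : a ≤ b := Fact.out
  have hb' : Narrows (Set.Ici a) ⟨b, hab⟩ := fun x => hb x
  hb'.orderIsoGluedSum.trans (GluedSum.congr (iicIciOrderIsoIcc hab) (iciIciOrderIsoIci hab))

end Interval

/-- If `(a, b)` is a gluing edge of a finite lattice `L` (`a ⋖ b` and both `a` and `b` are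
narrows), then `L` decomposes as the glued sum `↓a +̇ [a,b] +̇ ↑b`, and
`cd L = cd (↓a +̇ ↑b)`. -/
theorem gluing_edge_decomposition (L : Type) [Lattice L] [Finite L] [BoundedOrder L]
    (a b : L) [Fact (a ≤ b)] (hab : a ⋖ b) (ha : Narrows L a) (hb : Narrows L b) :
    Nonempty (L ≃o GluedSum (Set.Iic a) (GluedSum (Set.Icc a b) (Set.Ici b))) ∧
      latCd L = latCd (GluedSum (Set.Iic a) (Set.Ici b)) := by
  let e : L ≃o GluedSum (Set.Iic a) (GluedSum (Set.Icc a b) (Set.Ici b)) :=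
    ha.orderIsoGluedSum.trans (GluedSum.congr (.refl _) hb.iciOrderIsoGluedSum)
  refine ⟨⟨e⟩, ?_⟩
  rw [latCd_congr e, latCd_gluedSum, latCd_gluedSum, hab.latCd_Icc, one_mul, latCd_gluedSum]
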